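/- arXiv:1805.03535 — 2 statements merged into one kernel-verified Lean document; each statement's English description precedes it below -/
import Mathlib

section
/- Let 0 < c_L < c_H < 1. Then the function p ↦ J(c_L, c_H, p)/p is strictly decreasing on the interval (0, 1): for all 0 < p₁ < p₂ < 1, J(c_L, c_H, p₁)/p₁ > J(c_L, c_H, p₂)/p₂. -/
/-- Partial entropy function: φ(p) = p·log p for p > 0, φ(0) = 0. -/
noncomputable def phi (p : ℝ) : ℝ := if 0 < p then p * Real.log p else 0

/-- J(c_L, c_H, p) = p·φ(c_L) + (1−p)·φ(c_H) − φ(p·c_L + (1−p)·c_H). -/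
noncomputable def J (cL cH p : ℝ) : ℝ :=
  p * phi cL + (1 - p) * phi cH - phi (p * cL + (1 - p) * cH)

/-!
Writing `m p = p·c_L + (1−p)·c_H`, so that `m 0 = c_H`, one has
`J(p)/p = φ(c_L) − φ(c_H) − (φ(m p) − φ(m 0))/(p − 0)`.
Since `φ` is strictly convex on `[0, ∞)` and `m` is affine and injective, `φ ∘ m` is strictly
convex on `[0, 1]`, so the slope of its secants through `0` is strictly increasing.
-/

open Set Real

theorem StrictConvexOn.comp_affineMap_of_injective {𝕜 E F β : Type*} [Field 𝕜] [LinearOrder 𝕜]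
    [AddCommGroup E] [AddCommGroup F] [AddCommMonoid β] [PartialOrder β]
    [Module 𝕜 E] [Module 𝕜 F] [SMul 𝕜 β] {f : F → β} {s : Set F}
    (hf : StrictConvexOn 𝕜 s f) (g : E →ᵃ[𝕜] F) (hg : Function.Injective g) :
    StrictConvexOn 𝕜 (g ⁻¹' s) (f ∘ g) :=
  ⟨hf.1.affine_preimage _, fun x hx y hy hxy a b ha hb hab =>
    calc
      (f ∘ g) (a • x + b • y) = f (a • g x + b • g y) := by
        rw [Function.comp_apply, Convex.combo_affine_apply hab]
      _ < a • f (g x) + b • f (g y) := hf.2 hx hy (hg.ne hxy) ha hb hab⟩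

lemma phi_of_nonneg {x : ℝ} (hx : 0 ≤ x) : phi x = x * log x := by
  rcases hx.eq_or_lt with rfl | hx
  · simp [phi]
  · simp [phi, hx]

lemma strictConvexOn_phi : StrictConvexOn ℝ (Ici 0) phi :=
  strictConvexOn_mul_log.congr fun _ hx => (phi_of_nonneg hx).symm

lemma strictConvexOn_phi_mix {cL cH : ℝ} (hcL : 0 ≤ cL) (hcH : 0 ≤ cH) (hne : cL ≠ cH) :
    StrictConvexOn ℝ (Icc 0 1) fun p => phi (p * cL + (1 - p) * cH) := by
  have hm : ∀ p : ℝ, AffineMap.lineMap cH cL p = p * cL + (1 - p) * cH := fun p => by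
    rw [AffineMap.lineMap_apply_module, smul_eq_mul, smul_eq_mul, add_comm]
  have h := strictConvexOn_phi.comp_affineMap_of_injective _
    (AffineMap.lineMap_injective ℝ hne.symm)
  refine (h.subset (fun p hp => ?_) (convex_Icc 0 1)).congr fun p _ => ?_
  · have : 0 ≤ 1 - p := by linarith [hp.2]
    have : 0 ≤ p := hp.1
    rw [mem_preimage, hm, mem_Ici]
    positivity
  · rw [Function.comp_apply, hm]

lemma J_div_self (cL cH : ℝ) {p : ℝ} (hp : p ≠ 0) :
    J cL cH p / p = phi cL - phi cH - (phi (p * cL + (1 - p) * cH) - phi cH) / p := by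
  unfold J
  field_simp
  ring

theorem J_div_p_strictAnti_general (cL cH : ℝ)
    (hcL : 0 < cL) (hLH : cL < cH) :
    ∀ p₁ p₂ : ℝ, 0 < p₁ → p₁ < p₂ → p₂ < 1 →
      J cL cH p₁ / p₁ > J cL cH p₂ / p₂ := by
  intro p₁ p₂ hp₁ h12 hp₂
  have hψ := strictConvexOn_phi_mix hcL.le (hcL.trans hLH).le hLH.ne
  have hsecant := hψ.secant_strict_mono (a := 0) ⟨le_rfl, zero_le_one⟩
    ⟨hp₁.le, (h12.trans hp₂).le⟩ ⟨(hp₁.trans h12).le, hp₂.le⟩ hp₁.ne' (hp₁.trans h12).ne' h12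
  simp only [zero_mul, sub_zero, one_mul, zero_add] at hsecant
  rw [J_div_self cL cH hp₁.ne', J_div_self cL cH (hp₁.trans h12).ne']
  linarith

/-- The function p ↦ J(c_L, c_H, p)/p is strictly decreasing on (0, 1). -/
theorem J_div_p_strictAnti (cL cH : ℝ)
    (hcL : 0 < cL) (hLH : cL < cH) (hcH : cH < 1) :
    ∀ p₁ p₂ : ℝ, 0 < p₁ → p₁ < p₂ → p₂ < 1 →
      J cL cH p₁ / p₁ > J cL cH p₂ / p₂ :=
  J_div_p_strictAnti_general cL cH hcL hLH
end

section
/- Let 0 < c_L < c_H < 1 and p ∈ (0, 1), let J'(p) denote the derivative of p ↦ J(c_L, c_H, p) at p, and set x = p·(1 − c_L/c_H), so that 0 < x < 1. Then p·J'(p) − J(c_L, c_H, p) = −c_H·∑_{i=2}^{∞} x^i / i, where the series on the right converges. -/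
/-!
Writing `m(q) = q c_L + (1 - q) c_H`, the function `J` is affine in `q` minus `φ ∘ m`. The affine
part contributes `-φ(c_H)` to `p J'(p) - J(p)`, and with `φ'(m) = log m + 1` and
`m(p) = c_H (1 - x)` the remaining terms collapse to `c_H (log (1 - x) + x)`, which is
`-c_H ∑_{i ≥ 2} x^i / i` by the Mercator series.
-/

open Real

theorem hasSum_pow_add_two_div (x : ℝ) (hx : |x| < 1) :
    HasSum (fun n : ℕ => x ^ (n + 2) / (n + 2 : ℝ)) (-log (1 - x) - x) := by
  have h := (hasSum_nat_add_iff' (f := fun n : ℕ => x ^ (n + 1) / (n + 1)) 1).mpr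
    (hasSum_pow_div_log_of_abs_lt_one hx)
  simp only [Finset.range_one, Finset.sum_singleton, pow_one, Nat.cast_zero, zero_add,
    div_one] at h
  have hterm : (fun n : ℕ => x ^ (n + 2) / (n + 2 : ℝ))
      = fun n : ℕ => x ^ (n + 1 + 1) / ((n + 1 : ℕ) + 1 : ℝ) := by
    funext n
    push_cast
    ring
  rwa [hterm]

theorem phi_of_pos {t : ℝ} (ht : 0 < t) : phi t = t * log t := if_pos ht

theorem hasDerivAt_phi {t : ℝ} (ht : 0 < t) : HasDerivAt phi (log t + 1) t := by
  refine (hasDerivAt_mul_log ht.ne').congr_of_eventuallyEq ?_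
  filter_upwards [eventually_gt_nhds ht] with s hs
  exact phi_of_pos hs

theorem hasDerivAt_J {cL cH p : ℝ} (hm : 0 < p * cL + (1 - p) * cH) :
    HasDerivAt (J cL cH)
      (phi cL - phi cH - (log (p * cL + (1 - p) * cH) + 1) * (cL - cH)) p := by
  have hmix : HasDerivAt (fun q : ℝ => q * cL + (1 - q) * cH) (cL - cH) p := by
    have := ((hasDerivAt_id p).mul_const cL).add
      (((hasDerivAt_const p (1 : ℝ)).sub (hasDerivAt_id p)).mul_const cH)
    exact this.congr_deriv (by ring)
  have := (((hasDerivAt_id p).mul_const (phi cL)).add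
    (((hasDerivAt_const p (1 : ℝ)).sub (hasDerivAt_id p)).mul_const (phi cH))).sub
    ((hasDerivAt_phi hm).comp p hmix)
  exact this.congr_deriv (by ring)

theorem mul_deriv_J_sub_J {cL cH p : ℝ} (hcH : 0 < cH) (hm : 0 < p * cL + (1 - p) * cH) :
    p * deriv (J cL cH) p - J cL cH p
      = cH * (log (1 - p * (1 - cL / cH)) + p * (1 - cL / cH)) := by
  have hmx : 1 - p * (1 - cL / cH) = (p * cL + (1 - p) * cH) / cH := by
    field_simp
    ring
  rw [(hasDerivAt_J hm).deriv, hmx, log_div hm.ne' hcH.ne']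
  simp only [J, phi_of_pos hm, phi_of_pos hcH]
  field_simp
  ring

theorem J_div_p_numerator_series_general (cL cH p x : ℝ)
    (hcL : 0 < cL) (hLH : cL < cH)
    (hp : p ∈ Set.Ioo (0 : ℝ) 1)
    (hx : x = p * (1 - cL / cH)) :
    (Summable fun i : ℕ => x ^ (i + 2) / (i + 2 : ℝ)) ∧
    p * deriv (fun q => J cL cH q) p - J cL cH p
      = -cH * ∑' i : ℕ, x ^ (i + 2) / (i + 2 : ℝ) := by
  obtain ⟨hp0, hp1⟩ := hp
  have hcH : 0 < cH := hcL.trans hLH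
  have hratio : cL / cH ∈ Set.Ioo (0 : ℝ) 1 := ⟨by positivity, (div_lt_one hcH).mpr hLH⟩
  have hx_abs : |x| < 1 := by
    rw [hx, abs_of_pos (mul_pos hp0 (sub_pos.mpr hratio.2))]
    nlinarith [hratio.1]
  have hm : 0 < p * cL + (1 - p) * cH := by
    have : 0 < 1 - p := sub_pos.mpr hp1
    positivity
  have hS := hasSum_pow_add_two_div x hx_abs
  refine ⟨hS.summable, ?_⟩
  rw [hS.tsum_eq, mul_deriv_J_sub_J hcH hm, ← hx]
  ring

/-- With x = p·(1 − c_L/c_H), we have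
p·J'(p) − J(p) = −c_H·∑_{i=2}^∞ x^i/i, the series being convergent
(indexed here by i ↦ i + 2). -/
theorem J_div_p_numerator_series (cL cH p x : ℝ)
    (hcL : 0 < cL) (hLH : cL < cH) (hcH : cH < 1)
    (hp : p ∈ Set.Ioo (0 : ℝ) 1)
    (hx : x = p * (1 - cL / cH)) :
    (Summable fun i : ℕ => x ^ (i + 2) / (i + 2 : ℝ)) ∧
    p * deriv (fun q => J cL cH q) p - J cL cH p
      = -cH * ∑' i : ℕ, x ^ (i + 2) / (i + 2 : ℝ) :=
  J_div_p_numerator_series_general cL cH p x hcL hLH hp hx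
end
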